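/- arXiv:2503.23970 — 4 statements merged into one kernel-verified Lean document; each statement's English description precedes it below -/
import Mathlib

section
/- Let C = 1/(q+1) and Δ₂ = C² − 4h/(q+1). Then: (i) if Δ₂ < 0, there is no real x > 0 with x² − C·x + h/(q+1) = 0; (ii) if Δ₂ = 0, then x = 2h is the unique positive solution (a double root), so the system has the interior equilibrium point E₇ = (2h, 2h); (iii) if Δ₂ > 0, then the positive solutions are exactly the two distinct numbers x₈ = (C + √Δ₂)/2 and x₉ = (C − √Δ₂)/2, both positive, giving the interior equilibrium points E₈ = (x₈, x₈) and E₉ = (x₉, x₉). -/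
/-- The predator–prey vector field
    `F(x,y) = (x(1-x) - q x y - h, s y (1 - y/x)(y - m))`. -/
noncomputable def F (q s h m : ℝ) (p : ℝ × ℝ) : ℝ × ℝ :=
  (p.1 * (1 - p.1) - q * p.1 * p.2 - h, s * p.2 * (1 - p.2 / p.1) * (p.2 - m))

/-- The continuous linear map `ℝ² → ℝ²` with matrix `[[a, b], [c, d]]`. -/
noncomputable def clm (a b c d : ℝ) : (ℝ × ℝ) →L[ℝ] (ℝ × ℝ) :=
  (a • ContinuousLinearMap.fst ℝ ℝ ℝ + b • ContinuousLinearMap.snd ℝ ℝ ℝ).prod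
    (c • ContinuousLinearMap.fst ℝ ℝ ℝ + d • ContinuousLinearMap.snd ℝ ℝ ℝ)

/-- With `C = 1/(q+1)` and `Δ₂ = C² - 4h/(q+1)`:
(i) if `Δ₂ < 0` there is no positive root of `x² - C x + h/(q+1)` and no interior
equilibrium with `y = x`; (ii) if `Δ₂ = 0` the unique positive root is `2h`, giving the
equilibrium `E₇ = (2h, 2h)`; (iii) if `Δ₂ > 0` the positive roots are exactly the two
distinct positive numbers `x₈ = (C + √Δ₂)/2`, `x₉ = (C - √Δ₂)/2`, giving equilibria
`E₈ = (x₈, x₈)` and `E₉ = (x₉, x₉)`. -/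
theorem stmt4 (q s h m C Δ₂ : ℝ) (hq : 0 < q) (hs : 0 < s) (hh : 0 < h)
    (hm0 : 0 < m) (hm1 : m < 1) (hC : C = 1/(q+1)) (hΔ : Δ₂ = C^2 - 4*h/(q+1)) :
    (Δ₂ < 0 →
      (¬ ∃ x : ℝ, 0 < x ∧ x^2 - C*x + h/(q+1) = 0) ∧
      (¬ ∃ x : ℝ, 0 < x ∧ F q s h m (x, x) = (0, 0))) ∧
    (Δ₂ = 0 →
      {x : ℝ | 0 < x ∧ x^2 - C*x + h/(q+1) = 0} = {2*h} ∧
      {p : ℝ × ℝ | 0 < p.1 ∧ p.2 = p.1 ∧ F q s h m p = (0, 0)} = {(2*h, 2*h)}) ∧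
    (0 < Δ₂ →
      (C + Real.sqrt Δ₂)/2 ≠ (C - Real.sqrt Δ₂)/2 ∧
      0 < (C + Real.sqrt Δ₂)/2 ∧ 0 < (C - Real.sqrt Δ₂)/2 ∧
      {x : ℝ | 0 < x ∧ x^2 - C*x + h/(q+1) = 0} =
        {(C + Real.sqrt Δ₂)/2, (C - Real.sqrt Δ₂)/2} ∧
      {p : ℝ × ℝ | 0 < p.1 ∧ p.2 = p.1 ∧ F q s h m p = (0, 0)} =
        {((C + Real.sqrt Δ₂)/2, (C + Real.sqrt Δ₂)/2),
         ((C - Real.sqrt Δ₂)/2, (C - Real.sqrt Δ₂)/2)}) := by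
  have hq1 : (0:ℝ) < q + 1 := by linarith
  have hCpos : 0 < C := by rw [hC]; positivity
  have hKpos : 0 < h/(q+1) := by positivity
  have hΔ' : Δ₂ = C^2 - 4*(h/(q+1)) := by rw [hΔ]; ring
  -- key equivalence: for x > 0, F(x,x) = 0 ↔ quadratic vanishes
  have key : ∀ x : ℝ, 0 < x → (F q s h m (x, x) = (0, 0) ↔ x^2 - C*x + h/(q+1) = 0) := by
    intro x hx
    have h2 : s * x * (1 - x / x) * (x - m) = 0 := by
      rw [div_self hx.ne']; ring
    have heq : x * (1 - x) - q * x * x - h = -((q+1) * (x^2 - C*x + h/(q+1))) := by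
      rw [hC]; field_simp; ring
    simp only [F, Prod.mk.injEq, h2, and_true, heq, neg_eq_zero, mul_eq_zero]
    constructor
    · rintro (h' | h')
      · exact absurd h' hq1.ne'
      · exact h'
    · exact Or.inr
  refine ⟨?_, ?_, ?_⟩
  · -- Δ₂ < 0
    intro hneg
    have noroot : ¬ ∃ x : ℝ, 0 < x ∧ x^2 - C*x + h/(q+1) = 0 := by
      rintro ⟨x, hx, hroot⟩
      nlinarith [sq_nonneg (2*x - C)]
    refine ⟨noroot, ?_⟩
    rintro ⟨x, hx, hFx⟩
    exact noroot ⟨x, hx, (key x hx).mp hFx⟩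
  · -- Δ₂ = 0
    intro h0
    have hC4h : C = 4*h := by
      have : C^2 = 4*(h/(q+1)) := by linarith [hΔ']
      have hK : h/(q+1) = h*C := by rw [hC]; ring
      rw [hK] at this
      have h2 : C * C = (4*h) * C := by nlinarith
      exact mul_right_cancel₀ hCpos.ne' h2
    have hroot : ∀ x : ℝ, (0 < x ∧ x^2 - C*x + h/(q+1) = 0) ↔ x = 2*h := by
      intro x
      constructor
      · rintro ⟨hx, hr⟩
        have hsq : (2*x - C)^2 = 0 := by nlinarith
        have : 2*x - C = 0 := by
          exact pow_eq_zero_iff (n := 2) (by norm_num) |>.mp hsq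
        rw [hC4h] at this; linarith
      · rintro rfl
        refine ⟨by positivity, ?_⟩
        have hK : h/(q+1) = h*C := by rw [hC]; ring
        rw [hK, hC4h]; ring
    constructor
    · ext x
      simpa using hroot x
    · ext ⟨a, b⟩
      simp only [Set.mem_setOf_eq, Set.mem_singleton_iff, Prod.mk.injEq]
      constructor
      · rintro ⟨ha, rfl, hF⟩
        have := (hroot _).mp ⟨ha, (key _ ha).mp hF⟩
        exact ⟨this, this⟩
      · rintro ⟨rfl, rfl⟩
        have h2h : (0:ℝ) < 2*h := by positivity
        exact ⟨h2h, rfl, (key _ h2h).mpr ((hroot (2*h)).mpr rfl).2⟩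
  · -- 0 < Δ₂
    intro hpos
    set r₁ := (C + Real.sqrt Δ₂)/2 with hr₁
    set r₂ := (C - Real.sqrt Δ₂)/2 with hr₂
    have hsΔ : Real.sqrt Δ₂ ^ 2 = Δ₂ := Real.sq_sqrt hpos.le
    have hsnn : 0 ≤ Real.sqrt Δ₂ := Real.sqrt_nonneg _
    have hspos : 0 < Real.sqrt Δ₂ := Real.sqrt_pos.mpr hpos
    have hsltC : Real.sqrt Δ₂ < C := by nlinarith
    have hne : r₁ ≠ r₂ := by rw [hr₁, hr₂]; intro hcon; nlinarith
    have h1pos : 0 < r₁ := by rw [hr₁]; linarith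
    have h2pos : 0 < r₂ := by rw [hr₂]; linarith
    have hsq : Real.sqrt Δ₂ ^ 2 = C^2 - 4*(h/(q+1)) := by rw [hsΔ, hΔ']
    have factor : ∀ x : ℝ, x^2 - C*x + h/(q+1) = (x - r₁) * (x - r₂) := by
      intro x
      rw [hr₁, hr₂]
      linear_combination (1/4 : ℝ) * hsq
    have hroot : ∀ x : ℝ, (0 < x ∧ x^2 - C*x + h/(q+1) = 0) ↔ (x = r₁ ∨ x = r₂) := by
      intro x
      constructor
      · rintro ⟨hx, hr⟩
        rw [factor x, mul_eq_zero] at hr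
        rcases hr with h' | h'
        · exact Or.inl (by linarith)
        · exact Or.inr (by linarith)
      · rintro (rfl | rfl)
        · exact ⟨h1pos, by rw [factor]; ring⟩
        · exact ⟨h2pos, by rw [factor]; ring⟩
    refine ⟨hne, h1pos, h2pos, ?_, ?_⟩
    · ext x
      simpa [Set.mem_insert_iff] using hroot x
    · ext ⟨a, b⟩
      simp only [Set.mem_setOf_eq, Set.mem_insert_iff, Set.mem_singleton_iff,
        Prod.mk.injEq]
      constructor
      · rintro ⟨ha, rfl, hF⟩
        rcases (hroot _).mp ⟨ha, (key _ ha).mp hF⟩ with h' | h'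
        · exact Or.inl ⟨h', h'⟩
        · exact Or.inr ⟨h', h'⟩
      · rintro (⟨rfl, rfl⟩ | ⟨rfl, rfl⟩)
        · exact ⟨h1pos, rfl, (key _ h1pos).mpr ((hroot r₁).mpr (Or.inl rfl)).2⟩
        · exact ⟨h2pos, rfl, (key _ h2pos).mpr ((hroot r₂).mpr (Or.inr rfl)).2⟩
end

section
/- Suppose 0 < h < 1/4 and let x₂ = (1 + √(1 − 4h))/2. Then the Fréchet derivative of F at E₂ = (x₂, 0) is the linear map given by the matrix [[1 − 2x₂, −q·x₂], [0, −s·m]], and both eigenvalues 1 − 2x₂ and −s·m of this matrix are strictly negative. -/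
/-! At `(x, 0)` the predator equation is `-s m y` to first order, so the Jacobian of `F` is
upper triangular and its eigenvalues are its diagonal entries `1 - 2x` and `-s m`.
At `x₂` the first one equals `-√(1 - 4h)`. -/

lemma mem_spectrum_of_upperTriangular_left {K : Type*} [Field K] (a b d : K) :
    a ∈ spectrum K !![a, b; 0, d] := by
  rw [spectrum.mem_iff, Matrix.isUnit_iff_isUnit_det, isUnit_iff_ne_zero, not_not]
  simp [Matrix.det_fin_two, Matrix.algebraMap_matrix_apply]

lemma mem_spectrum_of_upperTriangular_right {K : Type*} [Field K] (a b d : K) :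
    d ∈ spectrum K !![a, b; 0, d] := by
  rw [spectrum.mem_iff, Matrix.isUnit_iff_isUnit_det, isUnit_iff_ne_zero, not_not]
  simp [Matrix.det_fin_two, Matrix.algebraMap_matrix_apply]

lemma hasFDerivAt_F (q s h m : ℝ) {x y : ℝ} (hx : x ≠ 0) :
    HasFDerivAt (F q s h m)
      (clm (1 - 2 * x - q * y) (-q * x) (s * y ^ 2 * (y - m) / x ^ 2)
        (s * ((1 - 2 * y / x) * (y - m) + y * (1 - y / x)))) (x, y) := by
  have hfst : HasFDerivAt (fun p : ℝ × ℝ => p.1) (ContinuousLinearMap.fst ℝ ℝ ℝ) (x, y) :=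
    hasFDerivAt_fst
  have hsnd : HasFDerivAt (fun p : ℝ × ℝ => p.2) (ContinuousLinearMap.snd ℝ ℝ ℝ) (x, y) :=
    hasFDerivAt_snd
  have hinv : HasFDerivAt (fun p : ℝ × ℝ => p.1⁻¹)
      ((-(x ^ 2)⁻¹) • ContinuousLinearMap.fst ℝ ℝ ℝ) (x, y) :=
    (hasDerivAt_inv hx).comp_hasFDerivAt (x, y) hfst
  have hprey := ((hfst.mul (hfst.const_sub 1)).sub ((hfst.const_mul q).mul hsnd)).sub_const h
  have hpred := ((hsnd.const_mul s).mul ((hsnd.mul hinv).const_sub 1)).mul (hsnd.sub_const m)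
  have hF : F q s h m = fun p : ℝ × ℝ =>
      (p.1 * (1 - p.1) - q * p.1 * p.2 - h, s * p.2 * (1 - p.2 * p.1⁻¹) * (p.2 - m)) := by
    funext p
    simp only [F, div_eq_mul_inv]
  rw [hF]
  refine (hprey.prodMk hpred).congr_fderiv ?_
  ext <;> simp [clm] <;> field_simp <;> ring

theorem stmt6_general (q s h m x2 : ℝ) (hs : 0 < s)
    (hm0 : 0 < m) (hh4 : h < 1/4)
    (hx2 : x2 = (1 + Real.sqrt (1 - 4*h))/2) :
    HasFDerivAt (F q s h m) (clm (1 - 2*x2) (-q*x2) 0 (-s*m)) ((x2, 0) : ℝ × ℝ) ∧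
    (1 - 2*x2) ∈ spectrum ℝ (!![1 - 2*x2, -q*x2; 0, -s*m] : Matrix (Fin 2) (Fin 2) ℝ) ∧
    (-s*m) ∈ spectrum ℝ (!![1 - 2*x2, -q*x2; 0, -s*m] : Matrix (Fin 2) (Fin 2) ℝ) ∧
    1 - 2*x2 < 0 ∧ -s*m < 0 := by
  have hx2_pos : 0 < x2 := by rw [hx2]; positivity
  have hx2_eq : 1 - 2 * x2 = -Real.sqrt (1 - 4 * h) := by rw [hx2]; ring
  refine ⟨?_, mem_spectrum_of_upperTriangular_left _ _ _,
    mem_spectrum_of_upperTriangular_right _ _ _, ?_, by linarith [mul_pos hs hm0]⟩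
  · simpa using hasFDerivAt_F q s h m (y := 0) hx2_pos.ne'
  · rw [hx2_eq]
    exact neg_neg_of_pos (Real.sqrt_pos.mpr (by linarith))

/-- If `0 < h < 1/4` and `x₂ = (1 + √(1-4h))/2`, the Fréchet derivative of `F` at
`E₂ = (x₂, 0)` is the linear map with matrix `[[1 - 2x₂, -q x₂], [0, -s m]]`, and both
eigenvalues `1 - 2x₂` and `-s m` of this matrix are strictly negative. -/
theorem stmt6 (q s h m x2 : ℝ) (hq : 0 < q) (hs : 0 < s) (hh : 0 < h)
    (hm0 : 0 < m) (hm1 : m < 1) (hh4 : h < 1/4)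
    (hx2 : x2 = (1 + Real.sqrt (1 - 4*h))/2) :
    HasFDerivAt (F q s h m) (clm (1 - 2*x2) (-q*x2) 0 (-s*m)) ((x2, 0) : ℝ × ℝ) ∧
    (1 - 2*x2) ∈ spectrum ℝ (!![1 - 2*x2, -q*x2; 0, -s*m] : Matrix (Fin 2) (Fin 2) ℝ) ∧
    (-s*m) ∈ spectrum ℝ (!![1 - 2*x2, -q*x2; 0, -s*m] : Matrix (Fin 2) (Fin 2) ℝ) ∧
    1 - 2*x2 < 0 ∧ -s*m < 0 :=
  stmt6_general q s h m x2 hs hm0 hh4 hx2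
end

section
/- Suppose 0 < h < 1/4 and let x₃ = (1 − √(1 − 4h))/2. Then the Fréchet derivative of F at E₃ = (x₃, 0) is the linear map given by the matrix [[1 − 2x₃, −q·x₃], [0, −s·m]], and its eigenvalues 1 − 2x₃ and −s·m satisfy 1 − 2x₃ > 0 and −s·m < 0; in particular the determinant of this matrix is strictly negative. -/
section UpperTriangular

variable {K : Type*} [Field K] (a b d : K)

theorem Matrix.left_mem_spectrum_of_fin_two_upperTriangular :
    a ∈ spectrum K !![a, b; 0, d] := by
  rw [spectrum.mem_iff, Matrix.isUnit_iff_isUnit_det]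
  simp [Matrix.det_fin_two, Matrix.algebraMap_matrix_apply]

theorem Matrix.right_mem_spectrum_of_fin_two_upperTriangular :
    d ∈ spectrum K !![a, b; 0, d] := by
  rw [spectrum.mem_iff, Matrix.isUnit_iff_isUnit_det]
  simp [Matrix.det_fin_two, Matrix.algebraMap_matrix_apply]

theorem Matrix.det_fin_two_upperTriangular_neg [LinearOrder K] [IsStrictOrderedRing K]
    {a d : K} (ha : 0 < a) (hd : d < 0) : (!![a, b; 0, d]).det < 0 := by
  rw [Matrix.det_fin_two_of, mul_zero, sub_zero]
  exact mul_neg_of_pos_of_neg ha hd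

end UpperTriangular

section PreyAxis

variable (q s h m : ℝ) {x : ℝ}

theorem hasFDerivAt_F_fst_prey_axis :
    HasFDerivAt (fun p : ℝ × ℝ => p.1 * (1 - p.1) - q * p.1 * p.2 - h)
      ((1 - 2 * x) • ContinuousLinearMap.fst ℝ ℝ ℝ + (-q * x) • ContinuousLinearMap.snd ℝ ℝ ℝ)
      (x, 0) := by
  have hfst := hasFDerivAt_fst (𝕜 := ℝ) (p := (x, (0 : ℝ)))
  have hsnd := hasFDerivAt_snd (𝕜 := ℝ) (p := (x, (0 : ℝ)))
  refine (((hfst.mul ((hasFDerivAt_const 1 _).sub hfst)).sub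
    ((hfst.const_mul q).mul hsnd)).sub_const h).congr_fderiv ?_
  refine ContinuousLinearMap.ext fun ⟨v₁, v₂⟩ => ?_
  simp only [zero_sub, smul_neg, Pi.sub_apply, zero_smul, add_zero, sub_apply, add_apply, neg_apply,
    smul_apply, ContinuousLinearMap.coe_fst', smul_eq_mul, ContinuousLinearMap.coe_snd', neg_mul]
  ring

theorem hasFDerivAt_F_snd_prey_axis (hx : x ≠ 0) :
    HasFDerivAt (fun p : ℝ × ℝ => s * p.2 * (1 - p.2 / p.1) * (p.2 - m))
      ((0 : ℝ) • ContinuousLinearMap.fst ℝ ℝ ℝ + (-s * m) • ContinuousLinearMap.snd ℝ ℝ ℝ)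
      (x, 0) := by
  have hfst := hasFDerivAt_fst (𝕜 := ℝ) (p := (x, (0 : ℝ)))
  have hsnd := hasFDerivAt_snd (𝕜 := ℝ) (p := (x, (0 : ℝ)))
  have hdiv := hsnd.mul ((hasFDerivAt_inv' hx).comp (x, (0 : ℝ)) hfst)
  simp only [div_eq_mul_inv]
  refine (((hsnd.const_mul s).mul ((hasFDerivAt_const 1 _).sub hdiv)).mul
    (hsnd.sub_const m)).congr_fderiv ?_
  refine ContinuousLinearMap.ext fun ⟨v₁, v₂⟩ => ?_
  simp only [Pi.mul_apply, mul_zero, Pi.sub_apply, Function.comp_apply, zero_mul, sub_zero, mul_one,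
    zero_smul, zero_sub, ContinuousLinearMap.neg_comp, smul_neg, neg_zero, zero_add, one_smul, neg_smul,
    neg_apply, smul_apply, ContinuousLinearMap.coe_snd', smul_eq_mul, neg_mul, neg_inj]
  ring

theorem hasFDerivAt_F_prey_axis (hx : x ≠ 0) :
    HasFDerivAt (F q s h m) (clm (1 - 2 * x) (-q * x) 0 (-s * m)) (x, 0) :=
  (hasFDerivAt_F_fst_prey_axis q h).prodMk (hasFDerivAt_F_snd_prey_axis s m hx)

end PreyAxis

theorem one_sub_sqrt_one_sub_four_mul_pos {h : ℝ} (hh : 0 < h) :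
    0 < 1 - Real.sqrt (1 - 4 * h) := by
  rw [sub_pos, Real.sqrt_lt' one_pos]
  linarith

theorem stmt7_general (q s h m x3 : ℝ) (hs : 0 < s) (hh : 0 < h)
    (hm0 : 0 < m) (hh4 : h < 1/4)
    (hx3 : x3 = (1 - Real.sqrt (1 - 4*h))/2) :
    HasFDerivAt (F q s h m) (clm (1 - 2*x3) (-q*x3) 0 (-s*m)) ((x3, 0) : ℝ × ℝ) ∧
    (1 - 2*x3) ∈ spectrum ℝ (!![1 - 2*x3, -q*x3; 0, -s*m] : Matrix (Fin 2) (Fin 2) ℝ) ∧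
    (-s*m) ∈ spectrum ℝ (!![1 - 2*x3, -q*x3; 0, -s*m] : Matrix (Fin 2) (Fin 2) ℝ) ∧
    0 < 1 - 2*x3 ∧ -s*m < 0 ∧
    (!![1 - 2*x3, -q*x3; 0, -s*m] : Matrix (Fin 2) (Fin 2) ℝ).det < 0 := by
  have hx3_pos : 0 < x3 := by
    rw [hx3]
    exact half_pos (one_sub_sqrt_one_sub_four_mul_pos hh)
  have hunstable : 0 < 1 - 2 * x3 := by
    rw [hx3, mul_div_cancel₀ _ two_ne_zero, sub_sub_cancel]
    exact Real.sqrt_pos.mpr (by linarith)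
  have hstable : -s * m < 0 := by
    rw [neg_mul, neg_lt_zero]
    exact mul_pos hs hm0
  exact ⟨hasFDerivAt_F_prey_axis q s h m hx3_pos.ne',
    Matrix.left_mem_spectrum_of_fin_two_upperTriangular _ _ _,
    Matrix.right_mem_spectrum_of_fin_two_upperTriangular _ _ _, hunstable, hstable,
    Matrix.det_fin_two_upperTriangular_neg _ hunstable hstable⟩

/-- If `0 < h < 1/4` and `x₃ = (1 - √(1-4h))/2`, the Fréchet derivative of `F` at
`E₃ = (x₃, 0)` is the linear map with matrix `[[1 - 2x₃, -q x₃], [0, -s m]]`, its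
eigenvalues satisfy `1 - 2x₃ > 0` and `-s m < 0`, and its determinant is negative. -/
theorem stmt7 (q s h m x3 : ℝ) (hq : 0 < q) (hs : 0 < s) (hh : 0 < h)
    (hm0 : 0 < m) (hm1 : m < 1) (hh4 : h < 1/4)
    (hx3 : x3 = (1 - Real.sqrt (1 - 4*h))/2) :
    HasFDerivAt (F q s h m) (clm (1 - 2*x3) (-q*x3) 0 (-s*m)) ((x3, 0) : ℝ × ℝ) ∧
    (1 - 2*x3) ∈ spectrum ℝ (!![1 - 2*x3, -q*x3; 0, -s*m] : Matrix (Fin 2) (Fin 2) ℝ) ∧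
    (-s*m) ∈ spectrum ℝ (!![1 - 2*x3, -q*x3; 0, -s*m] : Matrix (Fin 2) (Fin 2) ℝ) ∧
    0 < 1 - 2*x3 ∧ -s*m < 0 ∧
    (!![1 - 2*x3, -q*x3; 0, -s*m] : Matrix (Fin 2) (Fin 2) ℝ).det < 0 :=
  stmt7_general q s h m x3 hs hh hm0 hh4 hx3
end

section
/- Let A = 1 − q·m, Δ₁ = A² − 4h, h₁ = m − (q+1)·m², and suppose A > 0 and Δ₁ > 0. If m > A/2 and h = h₁, then x₅ := (A + √Δ₁)/2 = m, so E₅ = (m, m); consequently the Jacobian matrix of F at E₅ has eigenvalues 1 − 2m − q·m < 0 and 0. -/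
/-! The point `(m, m)` lies on the predator nullcline `y = m` and on the curve `y = x`, so the
second component of `F` is a product of two factors vanishing there and has zero derivative; the
Jacobian at `E₅` is therefore upper triangular. The condition `h = h₁` says exactly that `m` is a root
of the prey equation `x² - A x + h = 0`, and `m > A/2` makes it the larger root `x₅`. -/

open Polynomial

theorem Matrix.mem_spectrum_fin_two_upperTriangular_iff {K : Type*} [Field K] (a b d r : K) :
    r ∈ spectrum K !![a, b; 0, d] ↔ r = a ∨ r = d := by
  rw [Matrix.mem_spectrum_iff_isRoot_charpoly, Matrix.charpoly_fin_two, IsRoot.def]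
  have hroots : (r - a) * (r - d) = 0 ↔ r = a ∨ r = d := by
    rw [mul_eq_zero, sub_eq_zero, sub_eq_zero]
  simp only [eval_add, eval_sub, eval_pow, eval_mul, eval_X, eval_C, Matrix.trace_fin_two_of,
    Matrix.det_fin_two_of]
  rw [← hroots]
  constructor <;> intro h <;> linear_combination h

theorem DifferentiableAt.hasFDerivAt_mul_zero_of_eq_zero {𝕜 E 𝔸 : Type*} [NontriviallyNormedField 𝕜]
    [NormedAddCommGroup E] [NormedSpace 𝕜 E] [NormedRing 𝔸] [NormedAlgebra 𝕜 𝔸]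
    {a b : E → 𝔸} {x : E} (ha : DifferentiableAt 𝕜 a x) (hb : DifferentiableAt 𝕜 b x)
    (ha0 : a x = 0) (hb0 : b x = 0) : HasFDerivAt (fun y => a y * b y) (0 : E →L[𝕜] 𝔸) x := by
  refine (ha.hasFDerivAt.mul' hb.hasFDerivAt).congr_fderiv ?_
  ext v
  simp [ha0, hb0]

theorem quadratic_larger_root_eq_of_half_le {A m : ℝ} (hm : A / 2 ≤ m) :
    (A + Real.sqrt (A ^ 2 - 4 * (m * (A - m)))) / 2 = m := by
  have hsq : A ^ 2 - 4 * (m * (A - m)) = (2 * m - A) ^ 2 := by ring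
  rw [hsq, Real.sqrt_sq (by linarith)]
  ring

theorem hasFDerivAt_F_fst (q s h m : ℝ) (p : ℝ × ℝ) :
    HasFDerivAt (fun p => (F q s h m p).1)
      ((1 - 2 * p.1 - q * p.2) • ContinuousLinearMap.fst ℝ ℝ ℝ +
        (-q * p.1) • ContinuousLinearMap.snd ℝ ℝ ℝ) p := by
  have hfst := hasFDerivAt_fst (𝕜 := ℝ) (p := p)
  have hsnd := hasFDerivAt_snd (𝕜 := ℝ) (p := p)
  refine ((((hfst.mul ((hasFDerivAt_const 1 p).sub hfst)).sub
    ((hfst.const_mul q).mul hsnd)).sub_const h)).congr_fderiv ?_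
  ext
  · simp
    ring
  · simp

theorem hasFDerivAt_F_snd_diag (q s h : ℝ) {m : ℝ} (hm : m ≠ 0) :
    HasFDerivAt (fun p => (F q s h m p).2) (0 : ℝ × ℝ →L[ℝ] ℝ) (m, m) :=
  DifferentiableAt.hasFDerivAt_mul_zero_of_eq_zero (a := fun p : ℝ × ℝ => s * p.2 * (1 - p.2 / p.1))
    (by fun_prop (disch := exact hm)) (by fun_prop) (by simp [div_self hm]) (sub_self m)

theorem hasFDerivAt_F_diag (q s h : ℝ) {m : ℝ} (hm : m ≠ 0) :
    HasFDerivAt (F q s h m) (clm (1 - 2 * m - q * m) (-q * m) 0 0) (m, m) := by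
  have hzero : (0 : ℝ) • ContinuousLinearMap.fst ℝ ℝ ℝ + (0 : ℝ) • ContinuousLinearMap.snd ℝ ℝ ℝ
      = 0 := by simp
  rw [clm, hzero]
  exact (hasFDerivAt_F_fst q s h m (m, m)).prodMk (hasFDerivAt_F_snd_diag q s h hm)

theorem stmt11_general (q s h m x5 : ℝ)
    (hm0 : 0 < m)
    (hx5 : x5 = (1 - q*m + Real.sqrt ((1 - q*m)^2 - 4*h))/2)
    (hcond : (1 - q*m)/2 < m ∧ h = m - (q+1)*m^2) :
    x5 = m ∧
    HasFDerivAt (F q s h m) (clm (1 - 2*m - q*m) (-q*m) 0 0) ((m, m) : ℝ × ℝ) ∧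
    (1 - 2*m - q*m) ∈ spectrum ℝ
      (!![1 - 2*m - q*m, -q*m; 0, 0] : Matrix (Fin 2) (Fin 2) ℝ) ∧
    (0 : ℝ) ∈ spectrum ℝ
      (!![1 - 2*m - q*m, -q*m; 0, 0] : Matrix (Fin 2) (Fin 2) ℝ) ∧
    1 - 2*m - q*m < 0 := by
  obtain ⟨hhalf, rfl⟩ := hcond
  have hroot : m - (q + 1) * m ^ 2 = m * ((1 - q * m) - m) := by ring
  have hx : x5 = m := by rw [hx5, hroot, quadratic_larger_root_eq_of_half_le hhalf.le]
  refine ⟨hx, hasFDerivAt_F_diag q s _ hm0.ne', ?_, ?_, by linarith⟩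
  · exact (Matrix.mem_spectrum_fin_two_upperTriangular_iff _ _ _ _).2 (Or.inl rfl)
  · exact (Matrix.mem_spectrum_fin_two_upperTriangular_iff _ _ _ _).2 (Or.inr rfl)

/-- With `A = 1 - q m > 0`, `Δ₁ = A² - 4h > 0`, `h₁ = m - (q+1)m²`: if `m > A/2` and
`h = h₁` then `x₅ := (A + √Δ₁)/2 = m`, so `E₅ = (m, m)`; the Jacobian of `F` at `E₅` has
eigenvalues `1 - 2m - q m < 0` and `0`. -/
theorem stmt11 (q s h m x5 : ℝ) (hq : 0 < q) (hs : 0 < s) (hh : 0 < h)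
    (hm0 : 0 < m) (hm1 : m < 1)
    (hA : 0 < 1 - q*m) (hΔ : 0 < (1 - q*m)^2 - 4*h)
    (hx5 : x5 = (1 - q*m + Real.sqrt ((1 - q*m)^2 - 4*h))/2)
    (hcond : (1 - q*m)/2 < m ∧ h = m - (q+1)*m^2) :
    x5 = m ∧
    HasFDerivAt (F q s h m) (clm (1 - 2*m - q*m) (-q*m) 0 0) ((m, m) : ℝ × ℝ) ∧
    (1 - 2*m - q*m) ∈ spectrum ℝ
      (!![1 - 2*m - q*m, -q*m; 0, 0] : Matrix (Fin 2) (Fin 2) ℝ) ∧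
    (0 : ℝ) ∈ spectrum ℝ
      (!![1 - 2*m - q*m, -q*m; 0, 0] : Matrix (Fin 2) (Fin 2) ℝ) ∧
    1 - 2*m - q*m < 0 :=
  stmt11_general q s h m x5 hm0 hx5 hcond
end
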